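/- Let 𝐏 = ([n], ≤) be a poset, let G_1, …, G_n be nontrivial finite abelian groups, 𝒢 = G_1 × ⋯ × G_n, and let 𝒫_𝐏 be the partition of 𝒢 into the level sets of the poset weight wt_𝐏, and 𝒫_𝐏̄ the partition of 𝒢̂ = Ĝ_1 × ⋯ × Ĝ_n into the level sets of the dual-poset weight wt_𝐏̄. If the dual partition of 𝒫_𝐏 equals 𝒫_𝐏̄, then 𝐏 is a hierarchical poset; moreover, if 𝐏 = 𝐇(n; n_1,…,n_t) with index set 𝒩 = {(i,j) : 1 ≤ i ≤ t, 1 ≤ j ≤ n_i} and accordingly 𝒢 = ∏_{i=1}^t ∏_{j=1}^{n_i} G_{i,j}, then |G_{i,1}| = ⋯ = |G_{i,n_i}| for every i = 1, …, t. -/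

import Mathlib

open Finset
open scoped Classical

variable {ι : Type*} [Fintype ι] [DecidableEq ι]
  {H : ι → Type*} [∀ i, AddCommGroup (H i)] [∀ i, Fintype (H i)]

/-- The sum of the character `χ` over the block of the partition `P` indexed by `c`. -/
noncomputable def blockSum {G : Type*} [AddCommGroup G] [Fintype G]
    (P : Setoid G) (χ : AddChar G ℂ) (c : Quotient P) : ℂ :=
  ∑ g : G, if Quotient.mk P g = c then χ g else 0

/-- The dual partition `P̂` of the character group. -/
noncomputable def dualSetoid {G : Type*} [AddCommGroup G] [Fintype G]
    (P : Setoid G) : Setoid (AddChar G ℂ) :=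
  Setoid.ker (blockSum P)

/-- The sum `Σ_{χ ∈ Q_c} χ(g)` over the block of the dual partition indexed by `c`. -/
noncomputable def dualBlockSum {G : Type*} [AddCommGroup G] [Fintype G]
    (P : Setoid G) (g : G) (c : Quotient (dualSetoid P)) : ℂ :=
  ∑ᶠ χ : AddChar G ℂ, if Quotient.mk (dualSetoid P) χ = c then χ g else 0

/-- The bidual partition `P̂̂`, a partition of `G` via the canonical identification of the
double character group with `G`. -/
noncomputable def bidualSetoid {G : Type*} [AddCommGroup G] [Fintype G]
    (P : Setoid G) : Setoid G :=
  Setoid.ker (dualBlockSum P)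

/-- The `i`-th component of a character of a product group, under the canonical
identification of the character group of a product with the product of the character
groups. -/
noncomputable def comp1 (χ : AddChar (∀ i, H i) ℂ) (i : ι) : AddChar (H i) ℂ :=
  χ.compAddMonoidHom (AddMonoidHom.single H i)

/-- The poset weight `wt_𝐏(g) = |⟨supp(g)⟩|` of `g ∈ G₁ × ⋯ × Gₙ`: the size of the ideal
generated by the support of `g` in the poset whose order relation is `le`. -/
noncomputable def posetWt (le : ι → ι → Prop) (g : ∀ i, H i) : ℕ :=
  (Finset.univ.filter fun j : ι => ∃ i : ι, g i ≠ 0 ∧ le j i).card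

/-- The dual-poset weight `wt_𝐏̄(χ) = |⟨supp(χ)⟩_𝐏̄|` of a character `χ` of `G₁ × ⋯ × Gₙ`:
the size of the ideal generated, in the dual (reversed) poset, by the support of `χ`
(the set of indices where the component of `χ` is not the principal character). -/
noncomputable def dualPosetWt (le : ι → ι → Prop) (χ : AddChar (∀ i, H i) ℂ) : ℕ :=
  (Finset.univ.filter fun j : ι => ∃ i : ι, comp1 χ i ≠ 1 ∧ le i j).card


/-!
Fix nontrivial characters `ψ i` of the groups `G i` and let `x`, `y` be incomparable. With `W`
the set of indices below neither of them, the product characters of `ψ` over `W ∪ {y}` and over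
`W ∪ {x}` live on upper sets of the same size, so they have the same dual-poset weight and, by
hypothesis, the same sum over every weight class. On the class of weight `|↓x|` the elements with
nonzero `x`-coordinate are exactly those supported in `↓x`, which makes the `x`-side of this
identity (after subtracting the sum of `ψ` over `W`) equal to `-|G x| ∏_{z < x} |G z| ≠ 0`; the
`y`-side vanishes when `|↓x| < |↓y|`, because the class then has no element with nonzero
`y`-coordinate. Hence incomparable elements have down-sets of the same size and the same value of
`|G x| ∏_{z < x} |G z|`, so `x ↦ |↓x|` is a level function, and elements of one level have the same
strict down-set, hence groups of the same order.
-/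

lemma lt_iff_lt_of_strictMono_of_incomparable {ι β : Type*} [PartialOrder ι] [LinearOrder β]
    {f : ι → β} (hf : StrictMono f) (hinc : ∀ x y, ¬ x ≤ y → ¬ y ≤ x → f x = f y) {x y : ι} :
    x < y ↔ f x < f y := by
  refine ⟨fun h => hf h, fun h => ?_⟩
  by_cases hxy : x ≤ y
  · exact hxy.lt_of_ne (by rintro rfl; exact h.false)
  by_cases hyx : y ≤ x
  · exact absurd (hf.monotone hyx) h.not_ge
  · exact absurd (hinc x y hxy hyx) h.ne

section Downset

variable {ι : Type*} [Fintype ι] [PartialOrder ι]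

-- `Finset.Iic` would need a `LocallyFiniteOrderBot` instance.
noncomputable def downset (x : ι) : Finset ι := {j | j ≤ x}

@[simp] lemma mem_downset {x j : ι} : j ∈ downset x ↔ j ≤ x := by simp [downset]

lemma card_downset_strictMono : StrictMono fun x : ι => #(downset x) := fun _ _ hxy =>
  card_lt_card ⟨fun _ hz => mem_downset.2 ((mem_downset.1 hz).trans hxy.le),
    fun h => hxy.not_ge (mem_downset.1 (h (mem_downset.2 le_rfl)))⟩

noncomputable def notBelow (x y : ι) : Finset ι := {z | ¬ z ≤ x ∧ ¬ z ≤ y}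

@[simp] lemma mem_notBelow {x y z : ι} : z ∈ notBelow x y ↔ ¬ z ≤ x ∧ ¬ z ≤ y := by
  simp [notBelow]

lemma notBelow_comm (x y : ι) : notBelow x y = notBelow y x := by
  ext z; simp [and_comm]

lemma isUpperSet_insert_notBelow [DecidableEq ι] {x y : ι} (hyx : ¬ y ≤ x) :
    IsUpperSet (↑(insert y (notBelow x y)) : Set ι) := by
  intro z w hzw hz
  simp only [coe_insert, Set.mem_insert_iff, mem_coe, mem_notBelow] at hz ⊢
  rcases hz with rfl | ⟨hzx, hzy⟩
  · by_cases hwz : w ≤ z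
    · exact .inl (le_antisymm hwz hzw)
    · exact .inr ⟨fun hwx => hyx (hzw.trans hwx), hwz⟩
  · exact .inr ⟨fun hwx => hzx (hzw.trans hwx), fun hwy => hzy (hzw.trans hwy)⟩

end Downset

section PosetWeight

variable {ι : Type*} [Fintype ι] [PartialOrder ι] {G : ι → Type*} [∀ i, AddCommGroup (G i)]

lemma card_downset_le_posetWt {g : ∀ i, G i} {x : ι} (hx : g x ≠ 0) :
    #(downset x) ≤ posetWt (· ≤ ·) g :=
  card_le_card fun j hj => mem_filter.2 ⟨mem_univ j, x, hx, mem_downset.1 hj⟩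

lemma posetWt_eq_card_downset_iff {g : ∀ i, G i} {x : ι} (hx : g x ≠ 0) :
    posetWt (· ≤ ·) g = #(downset x) ↔ ∀ i, ¬ i ≤ x → g i = 0 := by
  have hsub : downset x ⊆ ({j | ∃ i, g i ≠ 0 ∧ j ≤ i} : Finset ι) := fun j hj =>
    mem_filter.2 ⟨mem_univ j, x, hx, mem_downset.1 hj⟩
  rw [posetWt, eq_comm]
  refine ⟨fun h i hix => ?_, fun h => ?_⟩
  · by_contra hi
    have := eq_of_subset_of_card_le hsub h.ge
    exact hix (mem_downset.1 (this ▸ mem_filter.2 ⟨mem_univ i, i, hi, le_rfl⟩))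
  · refine congrArg card (Subset.antisymm hsub fun j hj => ?_)
    obtain ⟨i, hi, hji⟩ := (mem_filter.1 hj).2
    exact mem_downset.2 (hji.trans (not_not.1 (mt (h i) hi)))

lemma posetWt_single [DecidableEq ι] (x : ι) {a : G x} (ha : a ≠ 0) :
    posetWt (· ≤ ·) (Pi.single x a) = #(downset x) :=
  (posetWt_eq_card_downset_iff (by simpa)).2 fun _ hix =>
    Pi.single_eq_of_ne (by rintro rfl; exact hix le_rfl) a

end PosetWeight

lemma exists_addChar_ne_one (A : Type*) [AddCommGroup A] [Finite A] [Nontrivial A] :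
    ∃ ψ : AddChar A ℂ, ψ ≠ 1 := by
  obtain ⟨a, ha⟩ := exists_ne (0 : A)
  obtain ⟨ψ, hψ⟩ := AddChar.exists_apply_ne_zero.2 ha
  exact ⟨ψ, AddChar.ne_one_iff.2 ⟨a, hψ⟩⟩

lemma blockSum_ker_mk {G α : Type*} [AddCommGroup G] [Fintype G] (f : G → α)
    (χ : AddChar G ℂ) (g₀ : G) :
    blockSum (Setoid.ker f) χ (Quotient.mk _ g₀) = ∑ g with f g = f g₀, χ g := by
  rw [blockSum, sum_filter]
  simp only [Quotient.eq, Setoid.ker_def]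

lemma sum_eq_of_dualSetoid_ker_eq {G α β : Type*} [AddCommGroup G] [Fintype G] {f : G → α}
    {d : AddChar G ℂ → β} (hdual : dualSetoid (Setoid.ker f) = Setoid.ker d)
    {χ₁ χ₂ : AddChar G ℂ} (h : d χ₁ = d χ₂) (g₀ : G) :
    ∑ g with f g = f g₀, χ₁ g = ∑ g with f g = f g₀, χ₂ g := by
  have hblock : blockSum (Setoid.ker f) χ₁ = blockSum (Setoid.ker f) χ₂ := by
    change (dualSetoid (Setoid.ker f)) χ₁ χ₂
    rw [hdual]
    exact h
  simpa only [blockSum_ker_mk] using congrFun hblock (Quotient.mk _ g₀)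

section ProductCharacter

variable {ι : Type*} {G : ι → Type*} [∀ i, AddCommGroup (G i)]

noncomputable def prodChar (ψ : ∀ i, AddChar (G i) ℂ) (V : Finset ι) : AddChar (∀ i, G i) ℂ :=
  ∏ i ∈ V, (ψ i).compAddMonoidHom (Pi.evalAddMonoidHom G i)

lemma prodChar_apply (ψ : ∀ i, AddChar (G i) ℂ) (V : Finset ι) (g : ∀ i, G i) :
    prodChar ψ V g = ∏ i ∈ V, ψ i (g i) := by
  simp [prodChar, AddChar.prod_apply]

lemma comp1_prodChar [DecidableEq ι] (ψ : ∀ i, AddChar (G i) ℂ) (V : Finset ι) (i : ι) :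
    comp1 (prodChar ψ V) i = if i ∈ V then ψ i else 1 := by
  ext a
  simp only [comp1, AddChar.compAddMonoidHom_apply, AddMonoidHom.single_apply, prodChar_apply]
  split_ifs with hi
  · rw [prod_eq_single_of_mem i hi fun j _ hji => by
      rw [Pi.single_eq_of_ne hji, AddChar.map_zero_eq_one], Pi.single_eq_same]
  · rw [AddChar.one_apply]
    exact prod_eq_one fun j hj => by
      rw [Pi.single_eq_of_ne (ne_of_mem_of_not_mem hj hi), AddChar.map_zero_eq_one]

lemma dualPosetWt_prodChar [Fintype ι] [DecidableEq ι] [PartialOrder ι]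
    {ψ : ∀ i, AddChar (G i) ℂ} (hψ : ∀ i, ψ i ≠ 1) {V : Finset ι}
    (hV : IsUpperSet (V : Set ι)) :
    dualPosetWt (· ≤ ·) (prodChar ψ V) = #V := by
  rw [dualPosetWt]
  congr 1
  ext j
  simp only [mem_filter, mem_univ, true_and, comp1_prodChar]
  exact ⟨fun ⟨i, hi, hij⟩ => hV hij (not_not.1 fun h => hi (if_neg h)),
    fun hj => ⟨j, by simpa [hj] using hψ j, le_rfl⟩⟩

end ProductCharacter

section WeightClassSums

variable {ι : Type*} [Fintype ι] [DecidableEq ι] [PartialOrder ι] {G : ι → Type*}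
  [∀ i, AddCommGroup (G i)] [∀ i, Fintype (G i)]

lemma sum_posetWt_mul_sub_one_eq_zero {m : ℕ} {y : ι} (hm : m < #(downset y))
    (A : (∀ i, G i) → ℂ) (ψ : AddChar (G y) ℂ) :
    ∑ g with posetWt (· ≤ ·) g = m, A g * (ψ (g y) - 1) = 0 :=
  sum_eq_zero fun g hg => by
    have hgy : g y = 0 := by
      by_contra h
      exact (card_downset_le_posetWt h).not_gt ((mem_filter.1 hg).2 ▸ hm)
    rw [hgy, AddChar.map_zero_eq_one, sub_self, mul_zero]

lemma sum_supported_downset_sub_one (ψ : ∀ i, AddChar (G i) ℂ) {x : ι} (hψ : ψ x ≠ 1) :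
    ∑ g : ∀ i, G i, (if ∀ i, ¬ i ≤ x → g i = 0 then ψ x (g x) - 1 else 0)
      = -(Fintype.card (G x) * ∏ i with i < x, (Fintype.card (G i) : ℂ)) := by
  set f : ∀ i, G i → ℂ := fun i a =>
    if i = x then ψ i a - 1 else if i ≤ x ∨ a = 0 then 1 else 0 with hf
  have hprod : ∀ g : ∀ i, G i,
      (if ∀ i, ¬ i ≤ x → g i = 0 then ψ x (g x) - 1 else 0) = ∏ i, f i (g i) := by
    intro g
    have hsupp : (∀ i, ¬ i ≤ x → g i = 0) ↔ ∀ i ∈ ({x}ᶜ : Finset ι), i ≤ x ∨ g i = 0 :=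
      ⟨fun h i _ => or_iff_not_imp_left.2 (h i), fun h i hix =>
        (h i (mem_compl.2 fun hi => hix (mem_singleton.1 hi ▸ le_rfl))).resolve_left hix⟩
    rw [Fintype.prod_eq_mul_prod_compl x,
      prod_congr rfl fun i hi => if_neg (by simpa using hi), prod_boole, mul_ite, mul_one,
      mul_zero]
    simp only [hsupp, hf, if_pos]
  have hsum : ∀ i, ∑ a, f i a =
      (if i = x then -(Fintype.card (G x) : ℂ) else 1) *
        (if i < x then (Fintype.card (G i) : ℂ) else 1) := by
    intro i
    by_cases hix : i = x
    · subst hix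
      simp [hf, sum_sub_distrib, AddChar.sum_eq_zero_iff_ne_zero.2 hψ]
    · by_cases hle : i ≤ x
      · simp [hf, hix, hle, hle.lt_of_ne hix]
      · have hlt : ¬ i < x := fun h => hle h.le
        simp [hf, hix, hle, hlt]
  rw [sum_congr rfl fun g _ => hprod g, ← Fintype.prod_sum, prod_congr rfl fun i _ => hsum i,
    prod_mul_distrib, Fintype.prod_ite_eq', ← prod_filter, neg_mul]

lemma sum_posetWt_eq_card_downset_mul_sub_one (ψ : ∀ i, AddChar (G i) ℂ) {x : ι} (hψ : ψ x ≠ 1)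
    {W : Finset ι} (hW : ∀ i ∈ W, ¬ i ≤ x) :
    ∑ g with posetWt (· ≤ ·) g = #(downset x), (∏ i ∈ W, ψ i (g i)) * (ψ x (g x) - 1)
      = -(Fintype.card (G x) * ∏ i with i < x, (Fintype.card (G i) : ℂ)) := by
  rw [sum_filter, ← sum_supported_downset_sub_one ψ hψ]
  refine sum_congr rfl fun g _ => ?_
  by_cases hgx : g x = 0
  · simp [hgx]
  simp only [posetWt_eq_card_downset_iff hgx]
  split_ifs with hsupp
  · rw [prod_eq_one fun i hi => by rw [hsupp i (hW i hi), AddChar.map_zero_eq_one], one_mul]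
  · rfl

lemma sum_posetWt_mul_sub_one_swap [∀ i, Nontrivial (G i)]
    (hdual : dualSetoid (Setoid.ker (posetWt (H := G) (· ≤ ·))) =
      Setoid.ker (dualPosetWt (H := G) (· ≤ ·)))
    {ψ : ∀ i, AddChar (G i) ℂ} (hψ : ∀ i, ψ i ≠ 1) {x y : ι} (hxy : ¬ x ≤ y) (hyx : ¬ y ≤ x) :
    ∑ g with posetWt (· ≤ ·) g = #(downset x),
        (∏ i ∈ notBelow x y, ψ i (g i)) * (ψ y (g y) - 1) =
      ∑ g with posetWt (· ≤ ·) g = #(downset x),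
        (∏ i ∈ notBelow x y, ψ i (g i)) * (ψ x (g x) - 1) := by
  have hx : x ∉ notBelow x y := by simp
  have hy : y ∉ notBelow x y := by simp
  have hupper := isUpperSet_insert_notBelow hxy
  rw [notBelow_comm] at hupper
  have hwt : dualPosetWt (· ≤ ·) (prodChar ψ (insert y (notBelow x y))) =
      dualPosetWt (· ≤ ·) (prodChar ψ (insert x (notBelow x y))) := by
    rw [dualPosetWt_prodChar hψ (isUpperSet_insert_notBelow hyx), dualPosetWt_prodChar hψ hupper,
      card_insert_of_notMem hx, card_insert_of_notMem hy]
  obtain ⟨a, ha⟩ := exists_ne (0 : G x)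
  have h := sum_eq_of_dualSetoid_ker_eq hdual hwt (Pi.single x a)
  simp only [posetWt_single x ha, prodChar_apply, prod_insert hx, prod_insert hy] at h
  simp only [mul_sub, mul_one, sum_sub_distrib, mul_comm _ (ψ _ _), h]

end WeightClassSums

section Hierarchy

variable {ι : Type*} [Fintype ι] [DecidableEq ι] [PartialOrder ι] {G : ι → Type*}
  [∀ i, AddCommGroup (G i)] [∀ i, Fintype (G i)] [∀ i, Nontrivial (G i)]

lemma not_card_downset_lt_of_incomparable
    (hdual : dualSetoid (Setoid.ker (posetWt (H := G) (· ≤ ·))) =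
      Setoid.ker (dualPosetWt (H := G) (· ≤ ·)))
    {ψ : ∀ i, AddChar (G i) ℂ} (hψ : ∀ i, ψ i ≠ 1) {x y : ι} (hxy : ¬ x ≤ y) (hyx : ¬ y ≤ x) :
    ¬ #(downset x) < #(downset y) := fun hlt => by
  have h := sum_posetWt_mul_sub_one_swap hdual hψ hxy hyx
  rw [sum_posetWt_mul_sub_one_eq_zero hlt,
    sum_posetWt_eq_card_downset_mul_sub_one ψ (hψ x) fun i hi => (mem_notBelow.1 hi).1] at h
  refine neg_ne_zero.2 (mul_ne_zero ?_ (prod_ne_zero_iff.2 fun i _ => ?_)) h.symm <;>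
    exact Nat.cast_ne_zero.2 Fintype.card_ne_zero

lemma card_downset_eq_of_incomparable
    (hdual : dualSetoid (Setoid.ker (posetWt (H := G) (· ≤ ·))) =
      Setoid.ker (dualPosetWt (H := G) (· ≤ ·)))
    {x y : ι} (hxy : ¬ x ≤ y) (hyx : ¬ y ≤ x) :
    #(downset x) = #(downset y) := by
  choose ψ hψ using fun i => exists_addChar_ne_one (G i)
  exact le_antisymm (not_lt.1 (not_card_downset_lt_of_incomparable hdual hψ hyx hxy))
    (not_lt.1 (not_card_downset_lt_of_incomparable hdual hψ hxy hyx))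

lemma card_mul_prod_lt_eq_of_incomparable
    (hdual : dualSetoid (Setoid.ker (posetWt (H := G) (· ≤ ·))) =
      Setoid.ker (dualPosetWt (H := G) (· ≤ ·)))
    {x y : ι} (hxy : ¬ x ≤ y) (hyx : ¬ y ≤ x) :
    Fintype.card (G x) * ∏ i with i < x, Fintype.card (G i) =
      Fintype.card (G y) * ∏ i with i < y, Fintype.card (G i) := by
  choose ψ hψ using fun i => exists_addChar_ne_one (G i)
  have h := sum_posetWt_mul_sub_one_swap hdual hψ hxy hyx
  rw [sum_posetWt_eq_card_downset_mul_sub_one ψ (hψ x) fun i hi => (mem_notBelow.1 hi).1,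
    card_downset_eq_of_incomparable hdual hxy hyx,
    sum_posetWt_eq_card_downset_mul_sub_one ψ (hψ y) fun i hi => (mem_notBelow.1 hi).2] at h
  exact_mod_cast (neg_inj.1 h).symm

theorem exists_level_of_dualSetoid_posetWt_eq
    (hdual : dualSetoid (Setoid.ker (posetWt (H := G) (· ≤ ·))) =
      Setoid.ker (dualPosetWt (H := G) (· ≤ ·))) :
    ∃ lev : ι → ℕ, (∀ i j, i < j ↔ lev i < lev j) ∧
      ∀ i j, lev i = lev j → Nat.card (G i) = Nat.card (G j) := by
  have hlt : ∀ {i j : ι}, i < j ↔ #(downset i) < #(downset j) :=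
    lt_iff_lt_of_strictMono_of_incomparable card_downset_strictMono fun _ _ =>
      card_downset_eq_of_incomparable hdual
  refine ⟨fun i => #(downset i), fun _ _ => hlt, fun i j (hij : #(downset i) = #(downset j)) => ?_⟩
  obtain rfl | hne := eq_or_ne i j
  · rfl
  have hbelow : ∀ k, k < i ↔ k < j := fun k => by rw [hlt, hlt, hij]
  have h := card_mul_prod_lt_eq_of_incomparable hdual
    (fun h => (hlt.1 (h.lt_of_ne hne)).ne hij) (fun h => (hlt.1 (h.lt_of_ne hne.symm)).ne hij.symm)
  simp only [hbelow] at h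
  simp only [Nat.card_eq_fintype_card]
  exact Nat.eq_of_mul_eq_mul_right (prod_pos fun k _ => Fintype.card_pos) h

end Hierarchy

/-- If the dual of the partition of `𝒢 = G₁ × ⋯ × Gₙ` into the level sets of the poset
weight `wt_𝐏` equals the partition of `𝒢̂` into the level sets of the dual-poset weight
`wt_𝐏̄`, then the poset `𝐏` is hierarchical — i.e. there is a level function `lev` with
`i < j` in `𝐏` iff `lev i < lev j` — and the groups belonging to a common level all have
the same order. -/
theorem poset_duality_implies_hierarchical
    {n : ℕ} (po : PartialOrder (Fin n)) (H : Fin n → Type*)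
    [∀ i, AddCommGroup (H i)] [∀ i, Fintype (H i)] [∀ i, Nontrivial (H i)]
    (hdual : dualSetoid (Setoid.ker (posetWt (H := H) po.le)) =
      Setoid.ker (dualPosetWt (H := H) po.le)) :
    ∃ lev : Fin n → ℕ,
      (∀ i j : Fin n, po.lt i j ↔ lev i < lev j) ∧
      (∀ i j : Fin n, lev i = lev j → Nat.card (H i) = Nat.card (H j)) :=
  -- `po` is not the instance order of `Fin n`, so it has to be passed explicitly.
  @exists_level_of_dualSetoid_posetWt_eq (Fin n) _ _ po H _ _ _ hdual
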